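/- Let G and H be commuting nonabelian subgroups of the group of orientation-preserving C² diffeomorphisms of [0,1). If H is a perfect group, then every element of H acts as the identity on the complement of Fix(G). -/

import Mathlib

/-!
Let `x` be moved by `g ∈ G` and let `I = (a, b)` be the component of the support of `g` containing
`x`; its endpoints are fixed by `g`. Kopell's lemma says that a `C¹` diffeomorphism commuting with
the `C²` diffeomorphism `g` and fixing one point of `I` fixes `I` pointwise; it follows from a
bounded-distortion estimate for the iterates of `g` on a fundamental domain. Hence every element
of `H` maps `I` to itself and acts freely on it. Comparing values at a point of `I` is then a
bi-invariant, total, Archimedean preorder on `H`, and Hölder's argument shows that commutators of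
`H` fix `I` pointwise. As `H` is perfect, all of `H` fixes `I`, in particular `x`.
-/

/-- A model for an orientation-preserving C^r diffeomorphism of the half-open
interval [0,1): a permutation of ℝ that is the identity outside [0,1), restricts to a
C^r monotone bijection of [0,1) with C^r inverse. -/
def IsIcoDiff (r : ℕ∞) (g : Equiv.Perm ℝ) : Prop :=
  ContDiffOn ℝ r ⇑g (Set.Ico 0 1) ∧ ContDiffOn ℝ r ⇑g.symm (Set.Ico 0 1) ∧
  Set.BijOn ⇑g (Set.Ico 0 1) (Set.Ico 0 1) ∧ StrictMonoOn ⇑g (Set.Ico 0 1) ∧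
  ∀ x : ℝ, x ∉ Set.Ico (0:ℝ) 1 → g x = x

open Set Filter Topology
open Equiv (Perm)
open scoped commutatorElement

theorem deriv_eq_derivWithin_Ico {φ : ℝ → ℝ} {x : ℝ} (hx : x ∈ Ioo (0 : ℝ) 1) :
    deriv φ x = derivWithin φ (Ico 0 1) x :=
  (derivWithin_of_mem_nhds (mem_of_superset (Ioo_mem_nhds hx.1 hx.2) Ioo_subset_Ico_self)).symm

namespace IsIcoDiff

variable {r : ℕ∞} {f g : Perm ℝ}

theorem apply_eq_self_of_notMem (hg : IsIcoDiff r g) {x : ℝ} (hx : x ∉ Ico (0 : ℝ) 1) :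
    g x = x :=
  hg.2.2.2.2 x hx

theorem mapsTo (hg : IsIcoDiff r g) : MapsTo g (Ico 0 1) (Ico 0 1) := hg.2.2.1.mapsTo

theorem strictMono (hg : IsIcoDiff r g) : StrictMono g := by
  intro x y hxy
  by_cases hx : x ∈ Ico (0 : ℝ) 1 <;> by_cases hy : y ∈ Ico (0 : ℝ) 1
  · exact hg.2.2.2.1 hx hy hxy
  · have hgx := (hg.mapsTo hx).2
    rw [hg.apply_eq_self_of_notMem hy]
    simp only [mem_Ico, not_and, not_lt] at hx hy
    linarith [hy (hx.1.trans hxy.le)]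
  · have hgy := (hg.mapsTo hy).1
    rw [hg.apply_eq_self_of_notMem hx]
    simp only [mem_Ico, not_and, not_lt] at hx hy
    by_contra! h
    linarith [hx (hgy.trans h)]
  · rwa [hg.apply_eq_self_of_notMem hx, hg.apply_eq_self_of_notMem hy]

theorem continuous (hg : IsIcoDiff r g) : Continuous g :=
  hg.strictMono.monotone.continuous_of_surjective g.surjective

theorem inv (hg : IsIcoDiff r g) : IsIcoDiff r g⁻¹ := by
  refine ⟨hg.2.1, by simpa [Equiv.Perm.inv_def] using hg.1, hg.2.2.1.equiv_symm,
    fun x _ y _ hxy => ?_, fun x hx => ?_⟩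
  · exact hg.strictMono.lt_iff_lt.1 (by simpa using hxy)
  · rw [Equiv.Perm.inv_eq_iff_eq, hg.apply_eq_self_of_notMem hx]

theorem mul (hf : IsIcoDiff r f) (hg : IsIcoDiff r g) : IsIcoDiff r (f * g) :=
  ⟨hf.1.comp hg.1 hg.mapsTo, hg.2.1.comp hf.2.1 hf.inv.mapsTo, hf.2.2.1.comp hg.2.2.1,
    hf.2.2.2.1.comp hg.2.2.2.1 hg.mapsTo, fun x hx => by
      simp [Equiv.Perm.mul_apply, hg.apply_eq_self_of_notMem hx, hf.apply_eq_self_of_notMem hx]⟩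

theorem one : IsIcoDiff r 1 :=
  ⟨contDiffOn_id, contDiffOn_id, bijOn_id _, strictMonoOn_id, fun _ _ => rfl⟩

variable (r) in
def subgroup : Subgroup (Perm ℝ) where
  carrier := {g | IsIcoDiff r g}
  mul_mem' := mul
  one_mem' := one
  inv_mem' := inv

theorem pow (hg : IsIcoDiff r g) (n : ℕ) : IsIcoDiff r (g ^ n) := (subgroup r).pow_mem hg n

theorem hasDerivAt (hr : r ≠ 0) (hg : IsIcoDiff r g) {x : ℝ} (hx : x ∈ Ioo (0 : ℝ) 1) :
    HasDerivAt g (deriv g x) x :=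
  ((hg.1.differentiableOn (mod_cast hr)).differentiableAt
    (mem_of_superset (Ioo_mem_nhds hx.1 hx.2) Ioo_subset_Ico_self)).hasDerivAt

theorem derivWithin_pos (hr : r ≠ 0) (hg : IsIcoDiff r g) {x : ℝ} (hx : x ∈ Ico (0 : ℝ) 1) :
    0 < derivWithin g (Ico 0 1) x := by
  have hd := ((hg.1.differentiableOn (mod_cast hr)) x hx).hasDerivWithinAt
  have hd' := ((hg.inv.1.differentiableOn (mod_cast hr)) (g x) (hg.mapsTo hx)).hasDerivWithinAt
  have hid := hd'.comp x hd hg.mapsTo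
  rw [show ⇑g⁻¹ ∘ ⇑g = id from funext g.symm_apply_apply] at hid
  have h1 := (uniqueDiffOn_Ico 0 1 x hx).eq_deriv _ hid (hasDerivWithinAt_id x _)
  exact (hg.strictMono.monotone.monotoneOn _).derivWithin_nonneg.lt_of_ne'
    (right_ne_zero_of_mul_eq_one h1)

theorem deriv_pos (hr : r ≠ 0) (hg : IsIcoDiff r g) {x : ℝ} (hx : x ∈ Ioo (0 : ℝ) 1) :
    0 < deriv g x :=
  deriv_eq_derivWithin_Ico hx ▸ hg.derivWithin_pos hr (Ioo_subset_Ico_self hx)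

theorem deriv_pow (hr : r ≠ 0) (hf : IsIcoDiff r f) {x : ℝ}
    (hx : ∀ i, (f ^ i) x ∈ Ioo (0 : ℝ) 1) (n : ℕ) :
    deriv (f ^ n) x = ∏ i ∈ Finset.range n, deriv f ((f ^ i) x) := by
  induction n with
  | zero => simp [deriv_id]
  | succ n ih =>
    rw [Finset.prod_range_succ, ← ih, pow_succ', Equiv.Perm.coe_mul,
      ((hf.hasDerivAt hr (hx n)).comp x ((hf.pow n).hasDerivAt hr (hx 0))).deriv, mul_comm]

end IsIcoDiff

theorem tendsto_pow_apply_of_lt {f : Perm ℝ} {a b y : ℝ} (hf : Continuous f)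
    (hmaps : MapsTo f (Ioo a b) (Ioo a b)) (hlt : ∀ z ∈ Ioo a b, f z < z) (hy : y ∈ Ioo a b) :
    Tendsto (fun n : ℕ => (f ^ n) y) atTop (𝓝 a) := by
  have hmem (n : ℕ) : (f ^ n) y ∈ Ioo a b := by
    rw [Equiv.Perm.coe_pow]; exact hmaps.iterate n hy
  have hanti : Antitone fun n : ℕ => (f ^ n) y := antitone_nat_of_succ_le fun n => by
    rw [pow_succ', Equiv.Perm.mul_apply]; exact (hlt _ (hmem n)).le
  have hbdd : BddBelow (range fun n : ℕ => (f ^ n) y) :=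
    ⟨a, by rintro _ ⟨n, rfl⟩; exact (hmem n).1.le⟩
  have hlim := tendsto_atTop_ciInf hanti hbdd
  set L := ⨅ n : ℕ, (f ^ n) y
  have haL : a ≤ L := le_ciInf fun n => (hmem n).1.le
  obtain rfl | haL := haL.eq_or_lt
  · exact hlim
  have hL : L ∈ Ioo a b := ⟨haL, (ciInf_le hbdd 0).trans_lt (by simpa using hy.2)⟩
  exact ((hlt L hL).ne (isFixedPt_of_tendsto_iterate
    (by simpa only [Equiv.Perm.coe_pow] using hlim) hf.continuousAt)).elim

theorem forall_apply_lt_or_forall_lt_apply {f : ℝ → ℝ} {s : Set ℝ} (hs : IsPreconnected s)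
    (hf : ContinuousOn f s) (hfix : ∀ y ∈ s, f y ≠ y) :
    (∀ y ∈ s, f y < y) ∨ ∀ y ∈ s, y < f y := by
  by_contra! h
  obtain ⟨⟨y₁, hy₁, h₁⟩, y₂, hy₂, h₂⟩ := h
  obtain ⟨z, hz, hfz⟩ := hs.intermediate_value₂ hy₂ hy₁ hf continuousOn_id h₂ h₁
  exact hfix z hz hfz

theorem le_mul_exp_of_lipschitzOnWith {φ : ℝ → ℝ} {s : Set ℝ} {M : NNReal} {m : ℝ}
    (hφ : LipschitzOnWith M φ s) (hm : 0 < m) (hmφ : ∀ x ∈ s, m ≤ φ x) {u v : ℝ} (hu : u ∈ s)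
    (hv : v ∈ s) : φ u ≤ φ v * Real.exp (M / m * |u - v|) := by
  have hφv : 1 ≤ φ v / m := (one_le_div hm).2 (hmφ v hv)
  have hlip : φ u - φ v ≤ M * |u - v| := by
    simpa [Real.dist_eq] using (le_abs_self _).trans (hφ.dist_le_mul u hu v hv)
  calc φ u ≤ φ v + M * |u - v| * 1 := by linarith
    _ ≤ φ v + M * |u - v| * (φ v / m) := by gcongr
    _ = φ v * (1 + M / m * |u - v|) := by field_simp
    _ ≤ φ v * Real.exp (M / m * |u - v|) := by
      gcongr
      · linarith [hmφ v hv]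
      · linarith [Real.add_one_le_exp (M / m * |u - v|)]

def HasDistortionLE (f : Perm ℝ) (s : Set ℝ) (K : ℝ) : Prop :=
  ∀ n : ℕ, ∀ u ∈ s, ∀ v ∈ s, deriv (f ^ n) u ≤ K * deriv (f ^ n) v

section Kopell

variable {f w : Perm ℝ} {a b c : ℝ}

theorem pow_apply_mem_Icc (hf : Monotone f) {u : ℝ} (hu : u ∈ Icc (f c) c) (i : ℕ) :
    (f ^ i) u ∈ Icc ((f ^ (i + 1)) c) ((f ^ i) c) := by
  simp only [Equiv.Perm.coe_pow, Function.iterate_succ_apply]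
  exact ⟨hf.iterate i hu.1, hf.iterate i hu.2⟩

theorem pow_apply_mem_Ioo (hmaps : MapsTo f (Ioo a b) (Ioo a b)) {y : ℝ} (hy : y ∈ Ioo a b)
    (n : ℕ) : (f ^ n) y ∈ Ioo a b := by
  rw [Equiv.Perm.coe_pow]
  exact hmaps.iterate n hy

theorem pow_apply_le_self (hmaps : MapsTo f (Ioo a b) (Ioo a b)) (hlt : ∀ y ∈ Ioo a b, f y < y)
    {y : ℝ} (hy : y ∈ Ioo a b) (n : ℕ) : (f ^ n) y ≤ y := by
  induction n with
  | zero => rfl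
  | succ n ih =>
    rw [pow_succ', Equiv.Perm.mul_apply]
    exact (hlt _ (pow_apply_mem_Ioo hmaps hy n)).le.trans ih

theorem sum_abs_pow_apply_sub_le (hf : Monotone f) (hmaps : MapsTo f (Ioo a b) (Ioo a b))
    (hc : c ∈ Ioo a b) {u v : ℝ} (hu : u ∈ Icc (f c) c) (hv : v ∈ Icc (f c) c) (n : ℕ) :
    ∑ i ∈ Finset.range n, |(f ^ i) u - (f ^ i) v| ≤ c - a := by
  set d : ℕ → ℝ := fun i => (f ^ i) c
  calc ∑ i ∈ Finset.range n, |(f ^ i) u - (f ^ i) v|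
      ≤ ∑ i ∈ Finset.range n, (d i - d (i + 1)) := by
        gcongr with i
        have hui := pow_apply_mem_Icc hf hu i
        have hvi := pow_apply_mem_Icc hf hv i
        rw [abs_sub_le_iff]
        constructor <;> linarith [hui.1, hui.2, hvi.1, hvi.2]
    _ = c - d n := Finset.sum_range_sub' d n
    _ ≤ c - a := by linarith [(pow_apply_mem_Ioo hmaps hc n).1]

theorem exists_hasDistortionLE (hf : IsIcoDiff 2 f) (ha : 0 ≤ a) (hb : b ≤ 1)
    (hmaps : MapsTo f (Ioo a b) (Ioo a b)) (hlt : ∀ y ∈ Ioo a b, f y < y) (hc : c ∈ Ioo a b) :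
    ∃ K, HasDistortionLE f (Icc (f c) c) K := by
  set F := derivWithin f (Ico 0 1)
  have hS : Icc a c ⊆ Ico 0 1 := Icc_subset_Ico ha (hc.2.trans_le hb)
  obtain ⟨M, hM⟩ := ((hf.1.derivWithin (uniqueDiffOn_Ico 0 1) (by norm_num)).mono
    hS).exists_lipschitzOnWith one_ne_zero (convex_Icc a c) isCompact_Icc
  obtain ⟨z, hz, hmin⟩ := isCompact_Icc.exists_isMinOn (nonempty_Icc.2 hc.1.le)
    ((hf.1.continuousOn_derivWithin (uniqueDiffOn_Ico 0 1) (by norm_num)).mono hS)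
  have hm : 0 < F z := hf.derivWithin_pos two_ne_zero (hS hz)
  have horbit : ∀ y ∈ Icc (f c) c, ∀ i : ℕ, (f ^ i) y ∈ Icc a c ∧ (f ^ i) y ∈ Ioo (0 : ℝ) 1 := by
    intro y hy i
    have h1 := pow_apply_mem_Icc hf.strictMono.monotone hy i
    have h2 := (pow_apply_mem_Ioo hmaps hc (i + 1)).1
    have h3 := pow_apply_le_self hmaps hlt hc i
    exact ⟨⟨h2.le.trans h1.1, h1.2.trans h3⟩, ha.trans_lt (h2.trans_le h1.1),
      (h1.2.trans h3).trans_lt (hc.2.trans_le hb)⟩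
  -- `f'` is log-Lipschitz on `[a, c]` and the iterates of `[f c, c]` are disjoint.
  refine ⟨Real.exp (M / F z * (c - a)), fun n u hu v hv => ?_⟩
  rw [hf.deriv_pow two_ne_zero (fun i => (horbit u hu i).2) n,
    hf.deriv_pow two_ne_zero (fun i => (horbit v hv i).2) n]
  calc ∏ i ∈ Finset.range n, deriv f ((f ^ i) u)
      ≤ ∏ i ∈ Finset.range n,
          deriv f ((f ^ i) v) * Real.exp (M / F z * |(f ^ i) u - (f ^ i) v|) := by
        refine Finset.prod_le_prod (fun i _ => (hf.deriv_pos two_ne_zero (horbit u hu i).2).le)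
          fun i _ => ?_
        rw [deriv_eq_derivWithin_Ico (horbit u hu i).2, deriv_eq_derivWithin_Ico (horbit v hv i).2]
        exact le_mul_exp_of_lipschitzOnWith hM hm (fun x hx => hmin hx) (horbit u hu i).1
          (horbit v hv i).1
    _ = (∏ i ∈ Finset.range n, deriv f ((f ^ i) v)) *
          Real.exp (M / F z * ∑ i ∈ Finset.range n, |(f ^ i) u - (f ^ i) v|) := by
        rw [Finset.prod_mul_distrib, ← Real.exp_sum, Finset.mul_sum]
    _ ≤ (∏ i ∈ Finset.range n, deriv f ((f ^ i) v)) * Real.exp (M / F z * (c - a)) := by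
        gcongr
        · exact Finset.prod_nonneg fun i _ => (hf.deriv_pos two_ne_zero (horbit v hv i).2).le
        · exact sum_abs_pow_apply_sub_le hf.strictMono.monotone hmaps hc hu hv n
    _ = _ := mul_comm _ _

theorem mapsTo_Icc_of_commute (hw : Monotone w) (hcomm : Commute f w) (hwc : w c = c) :
    MapsTo w (Icc (f c) c) (Icc (f c) c) := by
  have hwfc : w (f c) = f c := by
    rw [← Equiv.Perm.mul_apply, ← hcomm.eq, Equiv.Perm.mul_apply, hwc]
  exact fun x hx => ⟨hwfc ▸ hw hx.1, hwc ▸ hw hx.2⟩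

theorem derivWithin_eq_one_of_commute {r : ℕ∞} (hr : r ≠ 0) (hw : IsIcoDiff r w)
    (hf : Continuous f) (ha : 0 ≤ a) (hb : b ≤ 1) (hmaps : MapsTo f (Ioo a b) (Ioo a b))
    (hlt : ∀ y ∈ Ioo a b, f y < y) (hc : c ∈ Ioo a b) (hcomm : Commute f w) (hwc : w c = c) :
    derivWithin w (Ico 0 1) a = 1 := by
  have hd := tendsto_pow_apply_of_lt hf hmaps hlt hc
  have hwd (n : ℕ) : w ((f ^ n) c) = (f ^ n) c := by
    rw [← Equiv.Perm.mul_apply, ← (hcomm.pow_left n).eq, Equiv.Perm.mul_apply, hwc]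
  have hwa : w a = a := tendsto_nhds_unique ((hw.continuous.tendsto a).comp hd)
    (by simpa [Function.comp_def, hwd] using hd)
  have ha1 : a ∈ Ico (0 : ℝ) 1 := ⟨ha, hc.1.trans (hc.2.trans_le hb)⟩
  have hslope := hasDerivWithinAt_iff_tendsto_slope.1
    ((hw.1.differentiableOn (mod_cast hr)) a ha1).hasDerivWithinAt
  have hd' : Tendsto (fun n : ℕ => (f ^ n) c) atTop (𝓝[Ico 0 1 \ {a}] a) :=
    tendsto_nhdsWithin_iff.2 ⟨hd, Eventually.of_forall fun n =>
      have h := pow_apply_mem_Ioo hmaps hc n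
      ⟨⟨ha.trans h.1.le, h.2.trans_le hb⟩, h.1.ne'⟩⟩
  have hone (n : ℕ) : slope w a ((f ^ n) c) = 1 := by
    rw [slope_def_field, hwd, hwa]
    exact div_self (sub_ne_zero.2 (pow_apply_mem_Ioo hmaps hc n).1.ne')
  exact tendsto_nhds_unique (hslope.comp hd') (by simp [Function.comp_def, hone])

theorem deriv_le_of_commute (hf : IsIcoDiff 2 f) {r : ℕ∞} (hr : r ≠ 0) (hw : IsIcoDiff r w)
    (ha : 0 ≤ a) (hb : b ≤ 1) (hmaps : MapsTo f (Ioo a b) (Ioo a b))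
    (hlt : ∀ y ∈ Ioo a b, f y < y) (hc : c ∈ Ioo a b) (hcomm : Commute f w) (hwc : w c = c)
    {K : ℝ} (hK : HasDistortionLE f (Icc (f c) c) K)
    {x : ℝ} (hx : x ∈ Icc (f c) c) : deriv w x ≤ K := by
  have hJ : Icc (f c) c ⊆ Ioo (0 : ℝ) 1 :=
    (Icc_subset_Ioo (hmaps hc).1 hc.2).trans (Ioo_subset_Ioo ha hb)
  have hwx := mapsTo_Icc_of_commute hw.strictMono.monotone hcomm hwc hx
  have horbit (n : ℕ) : (f ^ n) x ∈ Ioo a b :=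
    pow_apply_mem_Ioo hmaps (Icc_subset_Ioo (hmaps hc).1 hc.2 hx) n
  -- Conjugating by `f ^ n` moves `x` towards `a`, where `w` has derivative `1`.
  have hbound (n : ℕ) : deriv w x ≤ K * derivWithin w (Ico 0 1) ((f ^ n) x) := by
    have hfn := Ioo_subset_Ioo ha hb (horbit n)
    have hchain : deriv w ((f ^ n) x) * deriv (f ^ n) x = deriv (f ^ n) (w x) * deriv w x := by
      have h1 := (hw.hasDerivAt hr hfn).comp x ((hf.pow n).hasDerivAt two_ne_zero (hJ hx))
      have h2 := ((hf.pow n).hasDerivAt two_ne_zero (hJ hwx)).comp x (hw.hasDerivAt hr (hJ hx))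
      rw [← Equiv.Perm.coe_mul, ← (hcomm.pow_left n).eq] at h1
      exact h1.unique h2
    rw [← deriv_eq_derivWithin_Ico hfn]
    refine le_of_mul_le_mul_right ?_ ((hf.pow n).deriv_pos two_ne_zero (hJ hwx))
    calc deriv w x * deriv (f ^ n) (w x) = deriv w ((f ^ n) x) * deriv (f ^ n) x := by
          rw [hchain, mul_comm]
      _ ≤ deriv w ((f ^ n) x) * (K * deriv (f ^ n) (w x)) := by
          gcongr
          · exact (hw.deriv_pos hr hfn).le
          · exact hK n x hx (w x) hwx
      _ = K * deriv w ((f ^ n) x) * deriv (f ^ n) (w x) := by ring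
  have hw'a := derivWithin_eq_one_of_commute hr hw hf.continuous ha hb hmaps hlt hc hcomm hwc
  have ha1 : a ∈ Ico (0 : ℝ) 1 := ⟨ha, hc.1.trans (hc.2.trans_le hb)⟩
  have hcont := ((hw.1.continuousOn_derivWithin (uniqueDiffOn_Ico 0 1)
    (mod_cast Order.one_le_iff_ne_zero.2 hr)) a ha1).tendsto
  rw [hw'a] at hcont
  have hlim : Tendsto (fun n : ℕ => K * derivWithin w (Ico 0 1) ((f ^ n) x)) atTop (𝓝 (K * 1)) :=
    (hcont.comp (tendsto_nhdsWithin_iff.2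
      ⟨tendsto_pow_apply_of_lt hf.continuous hmaps hlt (Icc_subset_Ioo (hmaps hc).1 hc.2 hx),
        Eventually.of_forall fun n =>
          Ioo_subset_Ico_self (Ioo_subset_Ioo ha hb (horbit n))⟩)).const_mul K
  simpa using ge_of_tendsto hlim (Eventually.of_forall hbound)

theorem apply_le_self_of_commute (hf : IsIcoDiff 2 f) {r : ℕ∞} (hr : r ≠ 0)
    (hw : IsIcoDiff r w) (ha : 0 ≤ a) (hb : b ≤ 1) (hmaps : MapsTo f (Ioo a b) (Ioo a b))
    (hlt : ∀ y ∈ Ioo a b, f y < y) (hc : c ∈ Ioo a b) (hcomm : Commute f w) (hwc : w c = c)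
    {K : ℝ} (hK : HasDistortionLE f (Icc (f c) c) K)
    {y : ℝ} (hy : y ∈ Icc (f c) c) : w y ≤ y := by
  by_contra! hwy
  have hwMc (M : ℕ) : (w ^ M) c = c := by rw [Equiv.Perm.coe_pow, Function.iterate_fixed hwc]
  set e : ℕ → ℝ := fun M => (w ^ M) y
  have he (M : ℕ) : e M ∈ Icc (f c) c := mapsTo_Icc_of_commute (hw.pow M).strictMono.monotone
    (hcomm.pow_right M) (hwMc M) hy
  have hsucc (M : ℕ) : e (M + 1) = (w ^ M) (w y) := by
    simp only [e, pow_succ, Equiv.Perm.mul_apply]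
  have hemono : Monotone e := monotone_nat_of_le_succ fun M => by
    rw [hsucc]; exact (hw.pow M).strictMono.monotone hwy.le
  have hconv := tendsto_atTop_ciSup hemono ⟨c, by rintro _ ⟨M, rfl⟩; exact (he M).2⟩
  have hstep : Tendsto (fun M => K * (e (M + 1) - e M)) atTop (𝓝 (K * 0)) := by
    simpa using ((hconv.comp (tendsto_add_atTop_nat 1)).sub hconv).const_mul K
  -- The inverse of `w ^ M` carries `[e M, e (M + 1)]` onto `[y, w y]` with derivative at most `K`.
  have hgap (M : ℕ) : w y - y ≤ K * (e (M + 1) - e M) := by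
    have hφ := (hw.pow M).inv
    have hφc : (w ^ M)⁻¹ c = c := by rw [Equiv.Perm.inv_eq_iff_eq, hwMc]
    have hJ : Icc (f c) c ⊆ Ioo (0 : ℝ) 1 :=
      (Icc_subset_Ioo (hmaps hc).1 hc.2).trans (Ioo_subset_Ioo ha hb)
    have hmvt := (convex_Icc (f c) c).image_sub_le_mul_sub_of_deriv_le hφ.continuous.continuousOn
      (fun x hx =>
        (hφ.hasDerivAt hr (hJ (interior_subset hx))).differentiableAt.differentiableWithinAt)
      (fun x hx => deriv_le_of_commute hf hr hφ ha hb hmaps hlt hc (hcomm.pow_right M).inv_right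
        hφc hK (interior_subset hx))
      (e M) (he M) (e (M + 1)) (he (M + 1)) (hemono M.le_succ)
    simpa [hsucc, e] using hmvt
  linarith [ge_of_tendsto' hstep hgap]

theorem eqOn_Ioo_of_eqOn_Icc (hmono : StrictMono f) (hcont : Continuous f)
    (hmaps : MapsTo f (Ioo a b) (Ioo a b)) (hlt : ∀ y ∈ Ioo a b, f y < y) (hfb : f b = b)
    (hcomm : Commute f w) (hc : c ∈ Ioo a b) (hJ : EqOn w id (Icc (f c) c)) :
    EqOn w id (Ioo a b) := by
  intro y hy
  have hpow (n : ℕ) : StrictMono (f ^ n) := by rw [Equiv.Perm.coe_pow]; exact hmono.iterate n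
  obtain ⟨m, hm⟩ :=
    ((tendsto_pow_apply_of_lt hcont hmaps hlt hc).eventually (gt_mem_nhds hy.1)).exists
  set z := (f ^ m)⁻¹ y
  have hzy : (f ^ m) z = y := (f ^ m).apply_symm_apply y
  have hcz : c < z := (hpow m).lt_iff_lt.1 (hzy ▸ hm)
  have hzb : z < b := (hpow m).lt_iff_lt.1 <| by
    rw [hzy, Equiv.Perm.coe_pow, Function.iterate_fixed hfb]; exact hy.2
  have hex : ∃ n, (f ^ n) z ≤ c :=
    (((tendsto_pow_apply_of_lt hcont hmaps hlt ⟨hc.1.trans hcz, hzb⟩).eventually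
      (gt_mem_nhds hc.1)).exists).imp fun _ => le_of_lt
  classical
  obtain ⟨k, hk⟩ : ∃ k, Nat.find hex = k + 1 :=
    Nat.exists_eq_add_one.2 (Nat.pos_of_ne_zero fun h => (h ▸ Nat.find_spec hex).not_gt hcz)
  have hkz : c < (f ^ k) z := not_le.1 (Nat.find_min hex (by omega))
  have hmem : (f ^ (k + 1)) z ∈ Icc (f c) c := by
    refine ⟨?_, hk ▸ Nat.find_spec hex⟩
    rw [pow_succ', Equiv.Perm.mul_apply]
    exact hmono.monotone hkz.le
  have hp : Commute (f ^ (k + 1) * (f ^ m)⁻¹) w :=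
    (hcomm.pow_left _).mul_left (hcomm.pow_left m).inv_left
  apply (f ^ (k + 1) * (f ^ m)⁻¹).injective
  rw [← Equiv.Perm.mul_apply, hp.eq, Equiv.Perm.mul_apply]
  exact hJ hmem

theorem eqOn_Ioo_of_commute_of_lt (hf : IsIcoDiff 2 f) {r : ℕ∞} (hr : r ≠ 0)
    (hw : IsIcoDiff r w) (ha : 0 ≤ a) (hb : b ≤ 1) (hfa : f a = a) (hfb : f b = b)
    (hlt : ∀ y ∈ Ioo a b, f y < y) (hcomm : Commute f w) (hc : c ∈ Ioo a b) (hwc : w c = c) :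
    EqOn w id (Ioo a b) := by
  have hmaps : MapsTo f (Ioo a b) (Ioo a b) := fun y hy =>
    ⟨hfa ▸ hf.strictMono hy.1, (hlt y hy).trans hy.2⟩
  obtain ⟨K, hK⟩ := exists_hasDistortionLE hf ha hb hmaps hlt hc
  refine eqOn_Ioo_of_eqOn_Icc hf.strictMono hf.continuous hmaps hlt hfb hcomm hc fun z hz => ?_
  have hle := apply_le_self_of_commute hf hr hw ha hb hmaps hlt hc hcomm hwc hK hz
  have hge := apply_le_self_of_commute hf hr hw.inv ha hb hmaps hlt hc hcomm.inv_right
    (by rw [Equiv.Perm.inv_eq_iff_eq, hwc]) hK hz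
  exact hle.antisymm (by simpa using hw.strictMono.monotone hge)

theorem kopell_lemma (hf : IsIcoDiff 2 f) {r : ℕ∞} (hr : r ≠ 0) (hw : IsIcoDiff r w)
    (hcomm : Commute f w) (ha : 0 ≤ a) (hb : b ≤ 1) (hfa : f a = a) (hfb : f b = b)
    (hfree : ∀ y ∈ Ioo a b, f y ≠ y) (hc : c ∈ Ioo a b) (hwc : w c = c) :
    EqOn w id (Ioo a b) := by
  rcases forall_apply_lt_or_forall_lt_apply isPreconnected_Ioo hf.continuous.continuousOn hfree
    with hlt | hgt
  · exact eqOn_Ioo_of_commute_of_lt hf hr hw ha hb hfa hfb hlt hcomm hc hwc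
  refine eqOn_Ioo_of_commute_of_lt hf.inv hr hw ha hb (by rw [Equiv.Perm.inv_eq_iff_eq, hfa])
    (by rw [Equiv.Perm.inv_eq_iff_eq, hfb]) (fun y hy => ?_) hcomm.inv_left hc hwc
  have hmem : f⁻¹ y ∈ Ioo a b :=
    ⟨hf.strictMono.lt_iff_lt.1 (by simpa [hfa] using hy.1),
      hf.strictMono.lt_iff_lt.1 (by simpa [hfb] using hy.2)⟩
  simpa using hgt _ hmem

end Kopell

theorem connectedComponentIn_eq_Ioo {U : Set ℝ} (hU : IsOpen U) (hbdd : Bornology.IsBounded U)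
    {x : ℝ} (hx : x ∈ U) : ∃ a b, connectedComponentIn U x = Ioo a b ∧ a ∉ U ∧ b ∉ U := by
  set C := connectedComponentIn U x
  have hCU : C ⊆ U := connectedComponentIn_subset U x
  have hC : Bornology.IsBounded C := hbdd.subset hCU
  obtain ⟨a, b, hCeq⟩ : ∃ a b, C = Ioo a b :=
    ⟨_, _, ((interior_maximal hC.subset_Icc_sInf_sSup hU.connectedComponentIn).trans
      interior_Icc.subset).antisymm
      ((isConnected_connectedComponentIn_iff.2 hx).Ioo_csInf_csSup_subset hC.bddBelow hC.bddAbove)⟩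
  have hxab : x ∈ Ioo a b := hCeq ▸ mem_connectedComponentIn hx
  have hab : a < b := hxab.1.trans hxab.2
  have hsub : Ioo a b ⊆ U := hCeq ▸ hCU
  refine ⟨a, b, hCeq, fun ha => ?_, fun hb => ?_⟩
  · have : Ico a b ⊆ C := isPreconnected_Ico.subset_connectedComponentIn
      (Ioo_subset_Ico_self hxab) (Ioo_insert_left hab ▸ insert_subset ha hsub)
    exact (hCeq ▸ this (left_mem_Ico.2 hab)).1.false
  · have : Ioc a b ⊆ C := isPreconnected_Ioc.subset_connectedComponentIn
      (Ioo_subset_Ioc_self hxab) (Ioo_insert_right hab ▸ insert_subset hb hsub)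
    exact (hCeq ▸ this (right_mem_Ioc.2 hab)).2.false

namespace IsIcoDiff

variable {r : ℕ∞} {g u : Perm ℝ}

theorem exists_connectedComponentIn_eq_Ioo (hg : IsIcoDiff r g) {x : ℝ} (hx : g x ≠ x) :
    ∃ a b, 0 ≤ a ∧ b ≤ 1 ∧ g a = a ∧ g b = b ∧
      connectedComponentIn {y | g y ≠ y} x = Ioo a b := by
  have hU : {y | g y ≠ y} ⊆ Ico 0 1 := fun y hy =>
    by_contra fun h => hy (hg.apply_eq_self_of_notMem h)
  obtain ⟨a, b, hC, ha, hb⟩ := connectedComponentIn_eq_Ioo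
    (isOpen_ne_fun hg.continuous continuous_id) ((Metric.isBounded_Ico 0 1).subset hU) hx
  have hxab : x ∈ Ioo a b := hC ▸ mem_connectedComponentIn hx
  have hab : a < b := hxab.1.trans hxab.2
  have hsub := closure_mono (hC ▸ (connectedComponentIn_subset _ _).trans hU)
  rw [closure_Ioo hab.ne, closure_Ico zero_ne_one] at hsub
  obtain ⟨h0, h1⟩ := (Icc_subset_Icc_iff hab.le).1 hsub
  exact ⟨a, b, h0, h1, not_not.1 ha, not_not.1 hb, hC⟩

theorem mapsTo_connectedComponentIn (hu : IsIcoDiff 2 u) (hr : r ≠ 0) (hg : IsIcoDiff r g)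
    (hcomm : Commute u g) {x : ℝ} (hx : g x ≠ x) :
    MapsTo u (connectedComponentIn {y | g y ≠ y} x) (connectedComponentIn {y | g y ≠ y} x) := by
  have hUinv : MapsTo u {y | g y ≠ y} {y | g y ≠ y} := fun y hy hgy => hy <| u.injective <| by
    rwa [← Equiv.Perm.mul_apply, hcomm.eq, Equiv.Perm.mul_apply]
  have hux : u x ∈ connectedComponentIn {y | g y ≠ y} x := by
    obtain ⟨a, b, -, -, hga, hgb, hC⟩ := hg.exists_connectedComponentIn_eq_Ioo hx
    have hxab : x ∈ Ioo a b := hC ▸ mem_connectedComponentIn hx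
    rw [hC]
    by_contra hux
    have hux' : u x ≠ x := fun h => hux (by rwa [h])
    obtain ⟨α, β, hα, hβ, huα, huβ, hCu⟩ := hu.exists_connectedComponentIn_eq_Ioo hux'
    have hxαβ : x ∈ Ioo α β := hCu ▸ mem_connectedComponentIn hux'
    have huxαβ : u x ∈ Ioo α β := ⟨huα ▸ hu.strictMono hxαβ.1, huβ ▸ hu.strictMono hxαβ.2⟩
    -- `u x` leaves `(a, b)`, so the component `(α, β)` of `u` contains an endpoint fixed by `g`.
    obtain ⟨c, hc, hgc⟩ : ∃ c ∈ Ioo α β, g c = c := by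
      by_cases h : u x ≤ a
      · exact ⟨a, ⟨huxαβ.1.trans_le h, hxab.1.trans hxαβ.2⟩, hga⟩
      · exact ⟨b, ⟨hxαβ.1.trans hxab.2,
          (not_lt.1 fun h' => hux ⟨not_le.1 h, h'⟩).trans_lt huxαβ.2⟩, hgb⟩
    have hfree : Ioo α β ⊆ {y | u y ≠ y} := hCu ▸ connectedComponentIn_subset _ x
    exact hx (kopell_lemma hu hr hg hcomm hα hβ huα huβ hfree hc hgc hxαβ)
  intro y hy
  have himage := (isPreconnected_connectedComponentIn.image u
    hu.continuous.continuousOn).subset_connectedComponentIn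
      (mem_image_of_mem u (mem_connectedComponentIn hx))
      (hUinv.mono_left (connectedComponentIn_subset _ x)).image_subset
  rw [← connectedComponentIn_eq hux] at himage
  exact himage (mem_image_of_mem u hy)

end IsIcoDiff

theorem lt_of_not_ge_of_total {α : Type*} [Preorder α] [@Std.Total α (· ≤ ·)] {a b : α}
    (h : ¬a ≤ b) : b < a :=
  lt_of_le_not_ge ((Std.Total.total a b).resolve_left h) h

section HolderTheorem

variable {G : Type*} [Group G] [Preorder G] [MulLeftMono G]

theorem le_zpow_of_forall_not_lt [@Std.Total G (· ≤ ·)] {s : G} (hmin : ∀ t : G, 1 < t → ¬t < s)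
    {g : G} {m : ℤ} (hm : s ^ m ≤ g) (hm' : g < s ^ (m + 1)) : g ≤ s ^ m := by
  have h1 : 1 ≤ (s ^ m)⁻¹ * g := le_inv_mul_iff_mul_le.2 (by simpa using hm)
  have h2 : (s ^ m)⁻¹ * g < s := by
    rw [← (OrderIso.mulLeft (s ^ m)).lt_iff_lt]
    simpa [← zpow_add_one] using hm'
  have h3 : (s ^ m)⁻¹ * g ≤ 1 := by
    by_contra h
    exact hmin _ (lt_of_le_not_ge h1 h) h2
  simpa using (OrderIso.mulLeft (s ^ m)).monotone h3

variable [MulRightMono G]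

theorem exists_zpow_le_lt_zpow_add_one [@Std.Total G (· ≤ ·)]
    (harch : ∀ ⦃s : G⦄, 1 < s → ∀ g : G, ∃ n : ℕ, g < s ^ n) {s : G} (hs : 1 < s) (g : G) :
    ∃ n : ℤ, s ^ n ≤ g ∧ g < s ^ (n + 1) := by
  obtain ⟨N, hN⟩ := harch hs g
  obtain ⟨M, hM⟩ := harch hs g⁻¹
  have hbdd : ∃ N' : ℤ, ∀ n : ℤ, s ^ n ≤ g → n ≤ N' := by
    refine ⟨N, fun n hn => ?_⟩
    by_contra! hlt
    have hmono : Monotone fun n : ℤ => s ^ n := monotone_int_of_le_succ fun n => by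
      rw [zpow_add_one]
      exact le_mul_of_one_le_right' hs.le
    have hNn : s ^ (N : ℤ) ≤ s ^ n := hmono hlt.le
    rw [zpow_natCast] at hNn
    exact (lt_of_le_of_lt (hNn.trans hn) hN).false
  have hex : ∃ n : ℤ, s ^ n ≤ g := ⟨-M, by simpa using inv_le_inv_iff.2 hM.le⟩
  obtain ⟨n, hn, hmax⟩ := Int.exists_greatest_of_bdd hbdd hex
  exact ⟨n, hn, lt_of_not_ge_of_total fun h => by linarith [hmax _ h]⟩

theorem commutatorElement_le_zpow {s a b : G} {m n k l : ℤ} (ha : s ^ m ≤ a)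
    (ha' : a ≤ s ^ (m + k)) (hb : s ^ n ≤ b) (hb' : b ≤ s ^ (n + l)) : ⁅a, b⁆ ≤ s ^ (k + l) :=
  calc ⁅a, b⁆ = a * b * a⁻¹ * b⁻¹ := commutatorElement_def a b
    _ ≤ s ^ (m + k) * s ^ (n + l) * (s ^ m)⁻¹ * (s ^ n)⁻¹ :=
      mul_le_mul' (mul_le_mul' (mul_le_mul' ha' hb') (inv_le_inv_iff.2 ha)) (inv_le_inv_iff.2 hb)
    _ = s ^ (k + l) := by group

theorem exists_one_lt_mul_self_le [@Std.Total G (· ≤ ·)]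
    (hdense : ∀ ⦃g : G⦄, 1 < g → ∃ t, 1 < t ∧ t < g) {g : G} (hg : 1 < g) :
    ∃ s, 1 < s ∧ s * s ≤ g := by
  obtain ⟨t, ht, htg⟩ := hdense hg
  by_cases htt : t * t ≤ g
  · exact ⟨t, ht, htt⟩
  have hgt : g ≤ t * t := (Std.Total.total g (t * t)).resolve_right htt
  refine ⟨t⁻¹ * g, ?_, ?_⟩
  · rw [← (OrderIso.mulLeft t).lt_iff_lt]
    simpa using htg
  · calc t⁻¹ * g * (t⁻¹ * g) ≤ t * (t⁻¹ * g) :=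
          (mul_le_mul_iff_right _).2 (inv_mul_le_iff_le_mul.2 hgt)
      _ = g := mul_inv_cancel_left t g

/-- Hölder's theorem, for a bi-invariant Archimedean total preorder. -/
theorem commutatorElement_le_one [@Std.Total G (· ≤ ·)]
    (harch : ∀ ⦃s : G⦄, 1 < s → ∀ g : G, ∃ n : ℕ, g < s ^ n) (a b : G) : ⁅a, b⁆ ≤ 1 := by
  by_contra hc
  replace hc : 1 < ⁅a, b⁆ := lt_of_not_ge_of_total hc
  by_cases hmin : ∃ s : G, 1 < s ∧ ∀ t : G, 1 < t → ¬t < s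
  · obtain ⟨s, hs, hmin⟩ := hmin
    obtain ⟨m, hm, hm'⟩ := exists_zpow_le_lt_zpow_add_one harch hs a
    obtain ⟨n, hn, hn'⟩ := exists_zpow_le_lt_zpow_add_one harch hs b
    have hc1 := commutatorElement_le_zpow (k := 0) (l := 0) hm
      (by simpa using le_zpow_of_forall_not_lt hmin hm hm') hn
      (by simpa using le_zpow_of_forall_not_lt hmin hn hn')
    exact (lt_of_lt_of_le hc (by simpa using hc1)).false
  · push Not at hmin
    obtain ⟨s₁, hs₁, hs₁c⟩ := exists_one_lt_mul_self_le hmin hc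
    obtain ⟨s, hs, hss₁⟩ := exists_one_lt_mul_self_le hmin hs₁
    obtain ⟨m, hm, hm'⟩ := exists_zpow_le_lt_zpow_add_one harch hs a
    obtain ⟨n, hn, hn'⟩ := exists_zpow_le_lt_zpow_add_one harch hs b
    have hc2 : ⁅a, b⁆ ≤ s * s := by
      have := commutatorElement_le_zpow (k := 1) (l := 1) hm hm'.le hn hn'.le
      rwa [zpow_add_one, zpow_one] at this
    have h4 : s * s * (s * s) ≤ s * s * 1 := by
      simpa using (mul_le_mul' hss₁ hss₁).trans (hs₁c.trans hc2)
    exact (lt_of_lt_of_le (Right.one_lt_mul' hs hs)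
      ((OrderIso.mulLeft (s * s)).le_iff_le.1 h4)).false

end HolderTheorem

theorem forall_apply_lt_of_apply_lt {t : Perm ℝ} {a b y : ℝ} (ht : Continuous t)
    (hfree : ∀ y ∈ Ioo a b, t y = y → EqOn t id (Ioo a b)) (hy : y ∈ Ioo a b)
    (hty : t y < y) : ∀ z ∈ Ioo a b, t z < z :=
  (forall_apply_lt_or_forall_lt_apply isPreconnected_Ioo ht.continuousOn
    fun z hz htz => hty.ne (hfree z hz htz hy)).resolve_right fun h => (h y hy).not_gt hty

theorem commutatorElement_apply_eq_self {H : Subgroup (Perm ℝ)} {a b : ℝ}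
    (hmono : ∀ u ∈ H, StrictMono u) (hcont : ∀ u ∈ H, Continuous u)
    (hmaps : ∀ u ∈ H, MapsTo u (Ioo a b) (Ioo a b))
    (hfree : ∀ u ∈ H, ∀ y ∈ Ioo a b, u y = y → EqOn u id (Ioo a b))
    {u v : Perm ℝ} (hu : u ∈ H) (hv : v ∈ H) {y : ℝ} (hy : y ∈ Ioo a b) : ⁅u, v⁆ y = y := by
  have hsign (t : Perm ℝ) (ht : t ∈ H) : t y < y → ∀ z ∈ Ioo a b, t z < z :=
    forall_apply_lt_of_apply_lt (hcont t ht) (hfree t ht) hy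
  have hglobal : ∀ s ∈ H, ∀ t ∈ H, s y ≤ t y → ∀ z ∈ Ioo a b, s z ≤ t z := by
    intro s hs t ht hst z hz
    have hts : t⁻¹ * s ∈ H := H.mul_mem (H.inv_mem ht) hs
    have key : (t⁻¹ * s) z ≤ z := by
      rcases hst.eq_or_lt with heq | hlt
      · exact (hfree _ hts y hy (by simp [heq]) hz).le
      · refine (hsign _ hts ?_ z hz).le
        simpa using (hmono t⁻¹ (H.inv_mem ht)).lt_iff_lt.2 hlt
    simpa using (hmono t ht).monotone key
  -- Compare elements of `H` by their values at `y`; freeness makes this preorder bi-invariant.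
  let _ : Preorder H := Preorder.lift fun s : H => (s : Perm ℝ) y
  have _ : MulLeftMono H := ⟨fun s _ _ h => (hmono s s.2).monotone h⟩
  have _ : MulRightMono H := ⟨fun s t₁ t₂ h => hglobal t₁ t₁.2 t₂ t₂.2 h _ (hmaps s s.2 hy)⟩
  have _ : @Std.Total H (· ≤ ·) := ⟨fun s t => le_total (s.1 y) (t.1 y)⟩
  have harch : ∀ ⦃s : H⦄, 1 < s → ∀ g : H, ∃ n : ℕ, g < s ^ n := by
    rintro ⟨s, hsH⟩ (hs : y < s y) ⟨g, hgH⟩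
    have hs' : ∀ z ∈ Ioo a b, s⁻¹ z < z := hsign _ (H.inv_mem hsH)
      ((hmono s hsH).lt_iff_lt.1 (by simpa using hs))
    obtain ⟨n, hn⟩ := ((tendsto_pow_apply_of_lt (hcont _ (H.inv_mem hsH)) (hmaps _ (H.inv_mem hsH))
      hs' (hmaps g hgH hy)).eventually (gt_mem_nhds hy.1)).exists
    refine ⟨n, show g y < (s ^ n) y from ?_⟩
    simpa [inv_pow] using hmono _ (H.pow_mem hsH n) hn
  have h1 := commutatorElement_le_one harch ⟨u, hu⟩ ⟨v, hv⟩
  have h2 := commutatorElement_le_one harch ⟨v, hv⟩ ⟨u, hu⟩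
  rw [← commutatorElement_inv, inv_le_one'] at h2
  exact (show ⁅u, v⁆ y ≤ y from h1).antisymm h2

theorem perfect_commuting_trivial_off_fix_general (G H : Subgroup (Equiv.Perm ℝ))
    (hG : ∀ g ∈ G, IsIcoDiff 2 g) (hH : ∀ h ∈ H, IsIcoDiff 2 h)
    (hcomm : ∀ g ∈ G, ∀ h ∈ H, Commute g h)
    (hperf : ⁅H, H⁆ = H) :
    ∀ h ∈ H, ∀ x ∈ Set.Ico (0:ℝ) 1, (∃ g ∈ G, g x ≠ x) → h x = x := by
  rintro h hh x - ⟨g, hgG, hgx⟩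
  obtain ⟨a, b, ha, hb, hga, hgb, hC⟩ := (hG g hgG).exists_connectedComponentIn_eq_Ioo hgx
  have hmaps (u : Perm ℝ) (hu : u ∈ H) : MapsTo u (Ioo a b) (Ioo a b) :=
    hC ▸ (hH u hu).mapsTo_connectedComponentIn two_ne_zero (hG g hgG) (hcomm g hgG u hu).symm hgx
  have hfree (u : Perm ℝ) (hu : u ∈ H) (y : ℝ) (hy : y ∈ Ioo a b) (huy : u y = y) :
      EqOn u id (Ioo a b) :=
    kopell_lemma (hG g hgG) two_ne_zero (hH u hu) (hcomm g hgG u hu) ha hb hga hgb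
      (hC ▸ connectedComponentIn_subset _ x) hy huy
  have hfix : H ≤ fixingSubgroup (Perm ℝ) (Ioo a b) := by
    rw [← hperf, Subgroup.commutator_le]
    exact fun u hu v hv => (mem_fixingSubgroup_iff _).2 fun y hy =>
      commutatorElement_apply_eq_self (fun u hu => (hH u hu).strictMono)
        (fun u hu => (hH u hu).continuous) hmaps hfree hu hv hy
  exact (mem_fixingSubgroup_iff _).1 (hfix hh) x (hC ▸ mem_connectedComponentIn hgx)

/-- Corollary 2.10: if G and H are commuting nonabelian subgroups of Diff₊²([0,1)) and H
is perfect, then every element of H is the identity on the complement of Fix(G). -/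
theorem perfect_commuting_trivial_off_fix (G H : Subgroup (Equiv.Perm ℝ))
    (hG : ∀ g ∈ G, IsIcoDiff 2 g) (hH : ∀ h ∈ H, IsIcoDiff 2 h)
    (hcomm : ∀ g ∈ G, ∀ h ∈ H, Commute g h)
    (hGna : ∃ g₁ ∈ G, ∃ g₂ ∈ G, ¬Commute g₁ g₂)
    (hHna : ∃ h₁ ∈ H, ∃ h₂ ∈ H, ¬Commute h₁ h₂)
    (hperf : ⁅H, H⁆ = H) :
    ∀ h ∈ H, ∀ x ∈ Set.Ico (0:ℝ) 1, (∃ g ∈ G, g x ≠ x) → h x = x :=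
  perfect_commuting_trivial_off_fix_general G H hG hH hcomm hperf
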